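/- Let 𝔸 = (A, ≤, →, Σ) be an implicative algebra with |A| < κ for a strongly inaccessible cardinal κ, and let W, ∈_W, =_W and the interpretation ‖·‖ be as defined below. Writing x ⊆ y for the formula ∀z(z ∈ x → z ∈ y): ‖x ⊆ y [x, y]‖ ≡_{Σ[W²]} the function (α, β) ↦ α ⊆_W β. -/

import Mathlib

universe u

/-- An implicative algebra `𝔸 = (A, ≤, →, Σ)`:  a complete lattice `(A, ≤)` together with an
implication `imp` which is antitone in its first argument, monotone in its second argument and
turns infima in the second argument into infima, and a separator `Sig ⊆ A` which is upward
closed, closed under modus ponens and contains the combinators `K` and `S`. -/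
structure ImplicativeAlgebra (A : Type u) [CompleteLattice A] where
  imp : A → A → A
  imp_antitone : ∀ ⦃a a' b : A⦄, a ≤ a' → imp a' b ≤ imp a b
  imp_monotone : ∀ ⦃a b b' : A⦄, b ≤ b' → imp a b ≤ imp a b'
  imp_sInf : ∀ (a : A) (S : Set A), imp a (sInf S) = ⨅ b ∈ S, imp a b
  Sig : Set A
  Sig_upward : ∀ ⦃a b : A⦄, a ∈ Sig → a ≤ b → b ∈ Sig
  Sig_mp : ∀ ⦃a b : A⦄, imp a b ∈ Sig → a ∈ Sig → b ∈ Sig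
  Sig_K : (⨅ a : A, ⨅ b : A, imp a (imp b a)) ∈ Sig
  Sig_S : (⨅ a : A, ⨅ b : A, ⨅ c : A,
      imp (imp a (imp b c)) (imp (imp a b) (imp a c))) ∈ Sig

namespace ImplicativeAlgebra

variable {A : Type u} [CompleteLattice A]

/-- `a × b := ⨅ x, ((a → (b → x)) → x)`. -/
def times (IA : ImplicativeAlgebra A) (a b : A) : A :=
  ⨅ x : A, IA.imp (IA.imp a (IA.imp b x)) x

/-- `a + b := ⨅ x, ((a → x) → ((b → x) → x))`. -/
def plus (IA : ImplicativeAlgebra A) (a b : A) : A :=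
  ⨅ x : A, IA.imp (IA.imp a x) (IA.imp (IA.imp b x) x)

/-- `∃⃗_{i} f i := ⨅ x, ((⨅ i, (f i → x)) → x)`.  (`∀⃗` is just `⨅`.) -/
def aex (IA : ImplicativeAlgebra A) {ι : Sort*} (f : ι → A) : A :=
  ⨅ x : A, IA.imp (⨅ i, IA.imp (f i) x) x

/-- `φ ⊢_{Σ[I]} ψ` iff `⨅ i, (φ i → ψ i) ∈ Σ`. -/
def SigLe (IA : ImplicativeAlgebra A) {ι : Sort*} (f g : ι → A) : Prop :=
  (⨅ i, IA.imp (f i) (g i)) ∈ IA.Sig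

/-- `φ ≡_{Σ[I]} ψ` iff `φ ⊢_{Σ[I]} ψ` and `ψ ⊢_{Σ[I]} φ`. -/
def SigEquiv (IA : ImplicativeAlgebra A) {ι : Sort*} (f g : ι → A) : Prop :=
  IA.SigLe f g ∧ IA.SigLe g f

end ImplicativeAlgebra

/-- Pre-elements of the cumulative hierarchy of partial functions valued in `A`:
an element is an `A`-labelled family of previously constructed elements, i.e. a partial
function (presented by a family indexed by its domain) from earlier elements to `A`. -/
inductive PreW (A : Type u) : Type (u + 1)
  | mk (ι : Type u) (fam : ι → PreW A) (val : ι → A)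

namespace PreW

variable {A : Type u}

/-- The (index type of the) domain of a partial function. -/
def dom : PreW A → Type u
  | ⟨ι, _, _⟩ => ι

/-- The family of elements of the domain. -/
def fam : (w : PreW A) → w.dom → PreW A
  | ⟨_, f, _⟩ => f

/-- The values in `A` of the partial function. -/
def val : (w : PreW A) → w.dom → A
  | ⟨_, _, v⟩ => v

/-- `w` is hereditarily of size `< κ`:  this carves out exactly the elements of the stage
`W_κ` of the hierarchy (for `κ` inaccessible). -/
def HSmall (κ : Cardinal.{u}) : PreW A → Prop
  | ⟨ι, f, _⟩ => Cardinal.mk ι < κ ∧ ∀ i, HSmall κ (f i)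

theorem HSmall.fam {κ : Cardinal.{u}} :
    ∀ {w : PreW A}, w.HSmall κ → ∀ i : w.dom, (w.fam i).HSmall κ
  | ⟨_, _, _⟩, h, i => h.2 i

/-- The rank of an element of the hierarchy. -/
noncomputable def rank : PreW A → Ordinal.{u}
  | ⟨_, f, _⟩ => ⨆ i, Order.succ (rank (f i))

theorem rank_lt_mk {ι : Type u} (f : ι → PreW A) (v : ι → A) (i : ι) :
    (f i).rank < (PreW.mk ι f v).rank := by
  have h : Order.succ (f i).rank ≤ ⨆ j, Order.succ (f j).rank := Ordinal.le_iSup _ i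
  have : (f i).rank < ⨆ j, Order.succ (f j).rank :=
    lt_of_lt_of_le (Order.lt_succ _) h
  simpa [rank] using this

end PreW

namespace ImplicativeAlgebra

variable {A : Type u} [CompleteLattice A]

/-- `α =_W β`, defined by recursion on rank:
`α =_W β := (α ⊆_W β) × (β ⊆_W α)` where
`α ⊆_W β := ∀⃗_{t ∈ dom α} (α t → (fam α t ∈_W β))` and
`γ ∈_W β := ∃⃗_{s ∈ dom β} (β s × (fam β s =_W γ))`. -/
noncomputable def eqW (IA : ImplicativeAlgebra A) : PreW A → PreW A → A
  | ⟨ι₁, f₁, v₁⟩, ⟨ι₂, f₂, v₂⟩ =>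
    IA.times
      (⨅ t : ι₁, IA.imp (v₁ t)
        (IA.aex fun s : ι₂ => IA.times (v₂ s) (IA.eqW (f₂ s) (f₁ t))))
      (⨅ t : ι₂, IA.imp (v₂ t)
        (IA.aex fun s : ι₁ => IA.times (v₁ s) (IA.eqW (f₁ s) (f₂ t))))
termination_by α β => max α.rank β.rank
decreasing_by
  · exact max_lt (lt_of_lt_of_le (PreW.rank_lt_mk f₂ v₂ s) (le_max_right _ _))
      (lt_of_lt_of_le (PreW.rank_lt_mk f₁ v₁ t) (le_max_left _ _))
  · exact max_lt (lt_of_lt_of_le (PreW.rank_lt_mk f₁ v₁ s) (le_max_left _ _))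
      (lt_of_lt_of_le (PreW.rank_lt_mk f₂ v₂ t) (le_max_right _ _))

/-- `α ∈_W β := ∃⃗_{s ∈ dom β} (β s × (fam β s =_W α))`. -/
noncomputable def memW (IA : ImplicativeAlgebra A) (α β : PreW A) : A :=
  IA.aex fun s : β.dom => IA.times (β.val s) (IA.eqW (β.fam s) α)

/-- `α ⊆_W β := ∀⃗_{t ∈ dom α} (α t → (fam α t ∈_W β))`. -/
noncomputable def subW (IA : ImplicativeAlgebra A) (α β : PreW A) : A :=
  ⨅ t : α.dom, IA.imp (α.val t) (IA.memW (α.fam t) β)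

end ImplicativeAlgebra

/-- The stage `W = W_κ` of the hierarchy: all hereditarily `< κ`-sized elements. -/
def WSet (A : Type u) (κ : Cardinal.{u}) : Type (u + 1) :=
  {w : PreW A // w.HSmall κ}

/-- An element of the domain of `w ∈ W`, as an element of `W`. -/
def WSet.fam {A : Type u} {κ : Cardinal.{u}} (w : WSet A κ) (i : w.1.dom) : WSet A κ :=
  ⟨w.1.fam i, w.2.fam i⟩

/-- Formulas (in context of length `n`) of the first-order language of set theory, with
(de Bruijn-style) variables `Fin n`, binary predicates `∈` and `=`, connectives `⊥`, `∧`, `∨`,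
`→` and quantifiers `∃`, `∀` (binding the last variable of the enlarged context). -/
inductive SetFormula : ℕ → Type
  | bot {n : ℕ} : SetFormula n
  | mem {n : ℕ} (i j : Fin n) : SetFormula n
  | eq {n : ℕ} (i j : Fin n) : SetFormula n
  | and {n : ℕ} (φ ψ : SetFormula n) : SetFormula n
  | or {n : ℕ} (φ ψ : SetFormula n) : SetFormula n
  | imp {n : ℕ} (φ ψ : SetFormula n) : SetFormula n
  | ex {n : ℕ} (φ : SetFormula (n + 1)) : SetFormula n
  | all {n : ℕ} (φ : SetFormula (n + 1)) : SetFormula n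

namespace SetFormula

/-- Renaming of variables (since the only terms of the language of set theory are variables,
substitution is a special case). -/
def rename : {n m : ℕ} → (Fin n → Fin m) → SetFormula n → SetFormula m
  | _, _, _, .bot => .bot
  | _, _, f, .mem i j => .mem (f i) (f j)
  | _, _, f, .eq i j => .eq (f i) (f j)
  | _, _, f, .and φ ψ => .and (φ.rename f) (ψ.rename f)
  | _, _, f, .or φ ψ => .or (φ.rename f) (ψ.rename f)
  | _, _, f, .imp φ ψ => .imp (φ.rename f) (ψ.rename f)
  | _, _, f, .ex φ => .ex (φ.rename (Fin.snoc (Fin.castSucc ∘ f) (Fin.last _)))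
  | _, _, f, .all φ => .all (φ.rename (Fin.snoc (Fin.castSucc ∘ f) (Fin.last _)))

/-- Universal closure `∀x₁ … ∀xₙ φ` of a formula in context of length `n`. -/
def allClose : {n : ℕ} → SetFormula n → SetFormula 0
  | 0, φ => φ
  | _ + 1, φ => allClose (.all φ)

end SetFormula

namespace ImplicativeAlgebra

variable {A : Type u} [CompleteLattice A]

/-- The interpretation `‖φ[x₁,…,xₙ]‖ : Wⁿ → A` of a formula in context, by recursion on the
structure of `φ`:  atomic formulas are interpreted by `∈_W` and `=_W`, `∧` by `×`, `∨` by `+`,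
`→` by `→`, `∃` by `∃⃗` over `W` and `∀` by `∀⃗` (i.e. `⨅`) over `W`. -/
noncomputable def interp (IA : ImplicativeAlgebra A) (κ : Cardinal.{u}) :
    {n : ℕ} → SetFormula n → (Fin n → WSet A κ) → A
  | _, .bot, _ => ⊥
  | _, .mem i j, v => IA.memW (v i).1 (v j).1
  | _, .eq i j, v => IA.eqW (v i).1 (v j).1
  | _, .and φ ψ, v => IA.times (IA.interp κ φ v) (IA.interp κ ψ v)
  | _, .or φ ψ, v => IA.plus (IA.interp κ φ v) (IA.interp κ ψ v)
  | _, .imp φ ψ, v => IA.imp (IA.interp κ φ v) (IA.interp κ ψ v)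
  | _, .ex φ, v => IA.aex fun β : WSet A κ => IA.interp κ φ (Fin.snoc v β)
  | _, .all φ, v => ⨅ β : WSet A κ, IA.interp κ φ (Fin.snoc v β)

end ImplicativeAlgebra


/-!
Both entailments are witnessed by single elements of the separator, obtained as λ-terms with
parameters in `Σ`: compiling such a term into `S` and `K` by bracket abstraction yields an element
of `Σ` below its denotation. A realizer is checked by instantiating each bound variable with the
formula it is meant to realize (`lam_le_imp`); a statement `(⨅ x⃗, φ x⃗) ∈ Σ` below is called
*realized*.

For `x ⊆_W y ⊢ ‖∀z (z ∈ x → z ∈ y)‖`, a realizer of `z ∈_W x` is transported along `x ⊆_W y`;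
this needs a realizer of transitivity of `=_W`. For the converse, the hypothesis is instantiated
at the elements `x t` of the domain of `x` (which lie in `W`), and `x(t) → x t ∈_W x` is realized
using a realizer of reflexivity of `=_W`. Reflexivity and transitivity of `=_W` are proved by
induction on rank, realized by a fixpoint of Turing's combinator `λx y. y (x x y)`.
-/

namespace ImplicativeAlgebra

variable {A : Type u} [CompleteLattice A] (IA : ImplicativeAlgebra A)

def app (a b : A) : A := sInf {c | a ≤ IA.imp b c}

def lam (f : A → A) : A := ⨅ a, IA.imp a (f a)

def combK : A := ⨅ a : A, ⨅ b : A, IA.imp a (IA.imp b a)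

def combS : A := ⨅ a : A, ⨅ b : A, ⨅ c : A,
  IA.imp (IA.imp a (IA.imp b c)) (IA.imp (IA.imp a b) (IA.imp a c))

theorem imp_iInf {ι : Sort*} (a : A) (f : ι → A) :
    IA.imp a (⨅ i, f i) = ⨅ i, IA.imp a (f i) := by
  rw [iInf, IA.imp_sInf, iInf_range]

theorem le_imp_app (a b : A) : a ≤ IA.imp b (IA.app a b) := by
  rw [app, IA.imp_sInf]
  exact le_iInf₂ fun _ hc => hc

theorem app_le_of_le_imp {f x X Y : A} (hf : f ≤ IA.imp X Y) (hx : x ≤ X) : IA.app f x ≤ Y :=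
  sInf_le (hf.trans (IA.imp_antitone hx))

theorem app_mono {a a' b b' : A} (ha : a ≤ a') (hb : b ≤ b') : IA.app a b ≤ IA.app a' b' :=
  IA.app_le_of_le_imp (ha.trans (IA.le_imp_app a' b')) hb

theorem app_mem {a b : A} (ha : a ∈ IA.Sig) (hb : b ∈ IA.Sig) : IA.app a b ∈ IA.Sig :=
  IA.Sig_mp (IA.Sig_upward ha (IA.le_imp_app a b)) hb

theorem lam_le_imp {f : A → A} {X Y : A} (h : f X ≤ Y) : IA.lam f ≤ IA.imp X Y :=
  (iInf_le _ X).trans (IA.imp_monotone h)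

theorem app_lam_le (f : A → A) (a : A) : IA.app (IA.lam f) a ≤ f a :=
  IA.app_le_of_le_imp (iInf_le _ a) le_rfl

theorem lam_mono {f g : A → A} (h : ∀ a, f a ≤ g a) : IA.lam f ≤ IA.lam g :=
  iInf_mono fun a => IA.imp_monotone (h a)

theorem combK_le (a b : A) : IA.combK ≤ IA.imp a (IA.imp b a) :=
  (iInf_le _ a).trans (iInf_le _ b)

theorem combS_le (a b c : A) :
    IA.combS ≤ IA.imp (IA.imp a (IA.imp b c)) (IA.imp (IA.imp a b) (IA.imp a c)) :=
  (iInf_le _ a).trans <| (iInf_le _ b).trans (iInf_le _ c)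

theorem app_combK_le {t b : A} (a : A) (h : t ≤ b) : IA.app IA.combK t ≤ IA.imp a b :=
  IA.app_le_of_le_imp (IA.combK_le b a) h

theorem app_combS_le {a b c f g : A} (hf : f ≤ IA.imp a (IA.imp b c)) (hg : g ≤ IA.imp a b) :
    IA.app (IA.app IA.combS f) g ≤ IA.imp a c :=
  IA.app_le_of_le_imp (IA.app_le_of_le_imp (IA.combS_le a b c) hf) hg

theorem skk_le (a : A) : IA.app (IA.app IA.combS IA.combK) IA.combK ≤ IA.imp a a :=
  IA.app_combS_le (IA.combK_le a (IA.imp a a)) (IA.combK_le a a)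

theorem pair_le_times {a b c d : A} (hc : c ≤ a) (hd : d ≤ b) :
    (IA.lam fun p => IA.app (IA.app p c) d) ≤ IA.times a b :=
  le_iInf fun _ => IA.lam_le_imp (IA.app_le_of_le_imp (IA.app_le_of_le_imp le_rfl hc) hd)

theorem app_le_of_le_times {e h a b x : A} (he : e ≤ IA.times a b)
    (hh : h ≤ IA.imp a (IA.imp b x)) : IA.app e h ≤ x :=
  IA.app_le_of_le_imp (he.trans (iInf_le _ x)) hh

theorem app_fst_le {e a b : A} (he : e ≤ IA.times a b) :
    IA.app e (IA.lam fun x => IA.lam fun _ => x) ≤ a :=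
  IA.app_le_of_le_times he (IA.lam_le_imp (IA.lam_le_imp le_rfl))

theorem app_snd_le {e a b : A} (he : e ≤ IA.times a b) :
    IA.app e (IA.lam fun _ => IA.lam fun y => y) ≤ b :=
  IA.app_le_of_le_times he (IA.lam_le_imp (IA.lam_le_imp le_rfl))

theorem exI_le_aex {ι : Sort*} {f : ι → A} {a : A} (i : ι) (h : a ≤ f i) :
    (IA.lam fun k => IA.app k a) ≤ IA.aex f :=
  le_iInf fun _ => IA.lam_le_imp (IA.app_le_of_le_imp (iInf_le _ i) h)

theorem app_le_of_le_aex {ι : Sort*} {f : ι → A} {e h x : A} (he : e ≤ IA.aex f)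
    (hh : h ≤ ⨅ i, IA.imp (f i) x) : IA.app e h ≤ x :=
  IA.app_le_of_le_imp (he.trans (iInf_le _ x)) hh

/-- Well-scoped λ-terms with constants from `C`; `var 0` is the innermost bound variable. -/
inductive Tm (C : Type u) : ℕ → Type u
  | var {n : ℕ} : Fin n → Tm C n
  | app {n : ℕ} : Tm C n → Tm C n → Tm C n
  | lam {n : ℕ} : Tm C (n + 1) → Tm C n
  | cst {n : ℕ} : C → Tm C n

inductive Comb (C : Type u) : ℕ → Type u
  | var {n : ℕ} : Fin n → Comb C n
  | app {n : ℕ} : Comb C n → Comb C n → Comb C n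
  | cst {n : ℕ} : C → Comb C n

namespace Comb

def eval {n : ℕ} : Comb IA.Sig n → (Fin n → A) → A
  | .var i, e => e i
  | .app t u, e => IA.app (eval t e) (eval u e)
  | .cst c, _ => c

def K {n : ℕ} : Comb IA.Sig n := .cst ⟨IA.combK, IA.Sig_K⟩

def S {n : ℕ} : Comb IA.Sig n := .cst ⟨IA.combS, IA.Sig_S⟩

def bracket {n : ℕ} : Comb IA.Sig (n + 1) → Comb IA.Sig n
  | .var i => Fin.cases (.app (.app (S IA) (K IA)) (K IA)) (fun k => .app (K IA) (.var k)) i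
  | .app t u => .app (.app (S IA) (bracket t)) (bracket u)
  | .cst c => .app (K IA) (.cst c)

theorem eval_bracket_le {n : ℕ} (t : Comb IA.Sig (n + 1)) (e : Fin n → A) :
    eval IA (bracket IA t) e ≤ IA.lam fun a => eval IA t (Fin.cons a e) := by
  refine le_iInf fun a => ?_
  induction t with
  | var i =>
    cases i using Fin.cases with
    | zero => exact IA.skk_le a
    | succ k => exact IA.app_combK_le a le_rfl
  | app t u iht ihu => exact IA.app_combS_le (iht.trans (IA.imp_monotone (IA.le_imp_app _ _))) ihu
  | cst c => exact IA.app_combK_le a le_rfl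

theorem eval_mem {n : ℕ} (t : Comb IA.Sig n) (e : Fin n → A) (he : ∀ i, e i ∈ IA.Sig) :
    eval IA t e ∈ IA.Sig := by
  induction t with
  | var i => exact he i
  | app t u iht ihu => exact IA.app_mem iht ihu
  | cst c => exact c.2

end Comb

namespace Tm

def eval : {n : ℕ} → Tm IA.Sig n → (Fin n → A) → A
  | _, .var i, e => e i
  | _, .app t u, e => IA.app (eval t e) (eval u e)
  | _, .lam t, e => IA.lam fun a => eval t (Matrix.vecCons a e)
  | _, .cst c, _ => c

def compile : {n : ℕ} → Tm IA.Sig n → Comb IA.Sig n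
  | _, .var i => .var i
  | _, .app t u => .app (compile t) (compile u)
  | _, .lam t => Comb.bracket IA (compile t)
  | _, .cst c => .cst c

theorem eval_compile_le {n : ℕ} (t : Tm IA.Sig n) (e : Fin n → A) :
    (compile IA t).eval IA e ≤ eval IA t e := by
  induction t with
  | var i => exact le_rfl
  | app t u iht ihu => exact IA.app_mono (iht e) (ihu e)
  | lam t ih => exact (Comb.eval_bracket_le IA _ e).trans (IA.lam_mono fun a => ih _)
  | cst c => exact le_rfl

theorem mem_Sig_of_eval_le (t : Tm IA.Sig 0) {P : A} (h : eval IA t ![] ≤ P) : P ∈ IA.Sig :=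
  IA.Sig_upward (Comb.eval_mem IA _ _ finZeroElim) ((eval_compile_le IA t _).trans h)

end Tm

theorem iInf_mem_Sig_of_wellFounded {ι : Sort*} {r : ι → ι → Prop} (hr : WellFounded r)
    (P : ι → A) (hstep : (⨅ i, IA.imp (⨅ j : {j // r j i}, P j.1) (P i)) ∈ IA.Sig) :
    (⨅ i, P i) ∈ IA.Sig := by
  set turing := IA.lam fun x => IA.lam fun y => IA.app y (IA.app (IA.app x x) y)
  have hturing : turing ∈ IA.Sig := Tm.mem_Sig_of_eval_le IA
    (.lam (.lam (.app (.var 0) (.app (.app (.var 1) (.var 1)) (.var 0))))) le_rfl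
  set g := ⨅ i, IA.imp (⨅ j : {j // r j i}, P j.1) (P i)
  set fix := IA.app (IA.app turing turing) g
  have hunfold : fix ≤ IA.app g fix :=
    (IA.app_mono (IA.app_lam_le _ turing) le_rfl).trans (IA.app_lam_le _ g)
  refine IA.Sig_upward (IA.app_mem (IA.app_mem hturing hturing) hstep) (le_iInf fun i => ?_)
  induction i using hr.induction with
  | _ i ih => exact hunfold.trans (IA.app_le_of_le_imp (iInf_le _ i) (le_iInf fun j => ih j.1 j.2))

end ImplicativeAlgebra

theorem PreW.rank_fam_lt {A : Type u} (x : PreW A) (t : x.dom) : (x.fam t).rank < x.rank := by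
  cases x
  exact PreW.rank_lt_mk _ _ t

namespace ImplicativeAlgebra

variable {A : Type u} [CompleteLattice A] (IA : ImplicativeAlgebra A)

theorem eqW_eq_times (a b : PreW A) : IA.eqW a b = IA.times (IA.subW a b) (IA.subW b a) := by
  cases a; cases b
  rw [eqW]
  rfl

theorem eqW_refl_realized : (⨅ x : PreW A, IA.eqW x x) ∈ IA.Sig := by
  refine IA.iInf_mem_Sig_of_wellFounded (InvImage.wf PreW.rank wellFounded_lt) _ ?_
  -- λ ih p. p c c,  where  c = λ w k. k (λ q. q w ih)
  refine Tm.mem_Sig_of_eval_le IA (.lam (.lam (.app (.app (.var 0)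
      (.lam (.lam (.app (.var 0) (.lam (.app (.app (.var 0) (.var 2)) (.var 4)))))))
      (.lam (.lam (.app (.var 0) (.lam (.app (.app (.var 0) (.var 2)) (.var 4))))))))) ?_
  simp only [Tm.eval, Matrix.cons_val]
  refine le_iInf fun x => IA.lam_le_imp ?_
  rw [eqW_eq_times]
  refine IA.pair_le_times ?_ ?_ <;>
  · refine le_iInf fun t => IA.lam_le_imp (IA.exI_le_aex t (IA.pair_le_times le_rfl ?_))
    exact iInf_le (fun j : {j // j.rank < x.rank} => IA.eqW j.1 j.1) ⟨x.fam t, x.rank_fam_lt t⟩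

theorem memW_of_subW_of_eqW_trans_realized :
    (⨅ (α : PreW A) (β : PreW A) (γ : PreW A), IA.imp
      (⨅ (t : α.dom) (s : β.dom), IA.imp (IA.eqW (β.fam s) (α.fam t))
        (IA.imp (IA.eqW (α.fam t) γ) (IA.eqW (β.fam s) γ)))
      (IA.imp (IA.subW α β) (IA.imp (IA.memW γ α) (IA.memW γ β)))) ∈ IA.Sig := by
  -- λ T h m. m (λ p. p (λ w e. h w (λ p'. p' (λ w' e' k. k (λ q. q w' (T e' e))))))
  refine Tm.mem_Sig_of_eval_le IA (.lam (.lam (.lam (.app (.var 0)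
    (.lam (.app (.var 0) (.lam (.lam (.app (.app (.var 4) (.var 1))
      (.lam (.app (.var 0) (.lam (.lam (.lam (.app (.var 0)
        (.lam (.app (.app (.var 0) (.var 3))
          (.app (.app (.var 10) (.var 2)) (.var 5))))))))))))))))))) ?_
  simp only [Tm.eval, Matrix.cons_val]
  refine le_iInf fun α => le_iInf₂ fun β γ => ?_
  refine IA.lam_le_imp (IA.lam_le_imp (IA.lam_le_imp ?_))
  refine IA.app_le_of_le_aex le_rfl (le_iInf fun t => IA.lam_le_imp ?_)
  refine IA.app_le_of_le_times le_rfl (IA.lam_le_imp (IA.lam_le_imp ?_))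
  refine IA.app_le_of_le_aex (IA.app_le_of_le_imp (iInf_le _ t) le_rfl)
    (le_iInf fun s => IA.lam_le_imp ?_)
  refine IA.app_le_of_le_times le_rfl (IA.lam_le_imp (IA.lam_le_imp ?_))
  refine IA.exI_le_aex (f := fun s => IA.times (β.val s) (IA.eqW (β.fam s) γ)) s ?_
  refine IA.pair_le_times le_rfl ?_
  exact IA.app_le_of_le_imp
    (IA.app_le_of_le_imp ((iInf_le _ t).trans (iInf_le _ s)) le_rfl) le_rfl

theorem subW_trans_le {x y z : PreW A} {M T e₁ e₂ : A}
    (hM : M ≤ ⨅ (α : PreW A) (β : PreW A) (γ : PreW A), IA.imp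
      (⨅ (t : α.dom) (s : β.dom), IA.imp (IA.eqW (β.fam s) (α.fam t))
        (IA.imp (IA.eqW (α.fam t) γ) (IA.eqW (β.fam s) γ)))
      (IA.imp (IA.subW α β) (IA.imp (IA.memW γ α) (IA.memW γ β))))
    (hT : T ≤ ⨅ (t : x.dom) (t' : y.dom) (s : z.dom), IA.imp (IA.eqW (z.fam s) (y.fam t'))
      (IA.imp (IA.eqW (y.fam t') (x.fam t)) (IA.eqW (z.fam s) (x.fam t))))
    (he₁ : e₁ ≤ IA.subW x y) (he₂ : e₂ ≤ IA.subW y z) :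
    (IA.lam fun v => IA.app (IA.app (IA.app M T) e₂) (IA.app e₁ v)) ≤ IA.subW x z := by
  refine le_iInf fun t => IA.lam_le_imp ?_
  have hMt := hM.trans <| (iInf_le _ y).trans <| (iInf_le _ z).trans (iInf_le _ (x.fam t))
  exact IA.app_le_of_le_imp
    (IA.app_le_of_le_imp (IA.app_le_of_le_imp hMt (hT.trans (iInf_le _ t))) he₂)
    (IA.app_le_of_le_imp (he₁.trans (iInf_le _ t)) le_rfl)

theorem eqW_trans_realized :
    (⨅ (a : PreW A) (b : PreW A) (c : PreW A),
      IA.imp (IA.eqW a b) (IA.imp (IA.eqW b c) (IA.eqW a c))) ∈ IA.Sig := by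
  let P : PreW A × PreW A × PreW A → A := fun i =>
    IA.imp (IA.eqW i.1 i.2.1) (IA.imp (IA.eqW i.2.1 i.2.2) (IA.eqW i.1 i.2.2))
  let maxRank : PreW A × PreW A × PreW A → Ordinal := fun i =>
    max i.1.rank (max i.2.1.rank i.2.2.rank)
  suffices h : (⨅ i, P i) ∈ IA.Sig from
    IA.Sig_upward h (le_iInf fun a => le_iInf₂ fun b c => iInf_le P (a, b, c))
  refine IA.iInf_mem_Sig_of_wellFounded (InvImage.wf maxRank wellFounded_lt) P ?_
  -- λ T e₁ e₂ p. p (λ v. M T (e₂ fst) (e₁ fst v)) (λ v. M T (e₁ snd) (e₂ snd v)),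
  -- where  M  realizes `memW_of_subW_of_eqW_trans_realized`
  refine Tm.mem_Sig_of_eval_le IA (.lam (.lam (.lam (.lam (.app
    (.app (.var 0) (.lam (.app
      (.app (.app (.cst ⟨_, IA.memW_of_subW_of_eqW_trans_realized⟩) (.var 4))
        (.app (.var 2) (.lam (.lam (.var 1)))))
      (.app (.app (.var 3) (.lam (.lam (.var 1)))) (.var 0)))))
    (.lam (.app
      (.app (.app (.cst ⟨_, IA.memW_of_subW_of_eqW_trans_realized⟩) (.var 4))
        (.app (.var 3) (.lam (.lam (.var 0)))))
      (.app (.app (.var 2) (.lam (.lam (.var 0)))) (.var 0))))))))) ?_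
  simp only [Tm.eval, Matrix.cons_val]
  refine le_iInf fun ⟨a, b, c⟩ => IA.lam_le_imp (IA.lam_le_imp (IA.lam_le_imp ?_))
  dsimp only
  have hIH : ∀ {x z : PreW A}, x.rank ≤ maxRank (a, b, c) → z.rank ≤ maxRank (a, b, c) →
      (⨅ j : {j // maxRank j < maxRank (a, b, c)}, P j.1) ≤
        ⨅ (t : x.dom) (t' : b.dom) (s : z.dom), P (z.fam s, b.fam t', x.fam t) :=
    fun {x z} hx hz => le_iInf fun t => le_iInf₂ fun t' s => iInf_le_of_le
      ⟨_, max_lt ((z.rank_fam_lt s).trans_le hz) (max_lt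
        ((b.rank_fam_lt t').trans_le (by simp [maxRank])) ((x.rank_fam_lt t).trans_le hx))⟩ le_rfl
  rw [eqW_eq_times IA a c]
  exact IA.pair_le_times
    (IA.subW_trans_le le_rfl (hIH (by simp [maxRank]) (by simp [maxRank]))
      (IA.app_fst_le (IA.eqW_eq_times a b).le) (IA.app_fst_le (IA.eqW_eq_times b c).le))
    (IA.subW_trans_le le_rfl (hIH (by simp [maxRank]) (by simp [maxRank]))
      (IA.app_snd_le (IA.eqW_eq_times b c).le) (IA.app_snd_le (IA.eqW_eq_times a b).le))

theorem memW_of_subW_realized :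
    (⨅ (α : PreW A) (β : PreW A) (γ : PreW A),
      IA.imp (IA.subW α β) (IA.imp (IA.memW γ α) (IA.memW γ β))) ∈ IA.Sig :=
  IA.Sig_upward (IA.app_mem IA.memW_of_subW_of_eqW_trans_realized IA.eqW_trans_realized) <|
    le_iInf fun α => le_iInf₂ fun β γ => IA.app_le_of_le_imp
      ((iInf_le _ α).trans <| (iInf_le _ β).trans (iInf_le _ γ))
      (le_iInf₂ fun t s =>
        (iInf_le _ (β.fam s)).trans <| (iInf_le _ (α.fam t)).trans (iInf_le _ γ))

theorem subW_of_forall_memW_realized (κ : Cardinal.{u}) :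
    (⨅ (α : WSet A κ) (β : WSet A κ), IA.imp
      (⨅ γ : WSet A κ, IA.imp (IA.memW γ.1 α.1) (IA.memW γ.1 β.1)) (IA.subW α.1 β.1)) ∈
      IA.Sig := by
  -- λ h w. h (λ k. k (λ q. q w r)),  where  r  realizes `eqW_refl_realized`
  refine Tm.mem_Sig_of_eval_le IA (.lam (.lam (.app (.var 1) (.lam (.app (.var 0)
    (.lam (.app (.app (.var 0) (.var 2)) (.cst ⟨_, IA.eqW_refl_realized⟩)))))))) ?_
  simp only [Tm.eval, Matrix.cons_val]
  refine le_iInf₂ fun α β => IA.lam_le_imp (le_iInf fun t => IA.lam_le_imp ?_)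
  exact IA.app_le_of_le_imp (iInf_le _ (α.fam t))
    (IA.exI_le_aex t (IA.pair_le_times le_rfl (iInf_le _ _)))

end ImplicativeAlgebra

theorem stmt10_general {A : Type u} [CompleteLattice A] (IA : ImplicativeAlgebra A)
    (κ : Cardinal.{u}) :
    IA.SigEquiv
      (fun v : Fin 2 → WSet A κ =>
        IA.interp κ (SetFormula.all ((SetFormula.mem 2 0).imp (SetFormula.mem 2 1))) v)
      (fun v : Fin 2 → WSet A κ => IA.subW (v 0).1 (v 1).1) := by
  have hinterp : ∀ v : Fin 2 → WSet A κ,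
      IA.interp κ (SetFormula.all ((SetFormula.mem 2 0).imp (SetFormula.mem 2 1))) v =
        ⨅ γ : WSet A κ, IA.imp (IA.memW γ.1 (v 0).1) (IA.memW γ.1 (v 1).1) := fun _ => rfl
  constructor
  · refine IA.Sig_upward (IA.subW_of_forall_memW_realized κ) (le_iInf fun v => ?_)
    dsimp only
    rw [hinterp]
    exact (iInf_le _ (v 0)).trans (iInf_le _ (v 1))
  · refine IA.Sig_upward IA.memW_of_subW_realized (le_iInf fun v => ?_)
    dsimp only
    rw [hinterp, IA.imp_iInf]
    exact le_iInf fun γ => (iInf_le _ (v 0).1).trans <| (iInf_le _ (v 1).1).trans (iInf_le _ γ.1)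

theorem stmt10 {A : Type u} [CompleteLattice A] (IA : ImplicativeAlgebra A)
    (κ : Cardinal.{u}) (hκ : κ.IsInaccessible) (hA : Cardinal.mk A < κ) :
    IA.SigEquiv
      (fun v : Fin 2 → WSet A κ =>
        IA.interp κ (SetFormula.all ((SetFormula.mem 2 0).imp (SetFormula.mem 2 1))) v)
      (fun v : Fin 2 → WSet A κ => IA.subW (v 0).1 (v 1).1) :=
  stmt10_general IA κ
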